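/- arXiv:math/0703312 — 5 statements merged into one kernel-verified Lean document; each statement's English description precedes it below -/
import Mathlib

section
/- The sets S_1, S_2, S_3, S_4 are supplementary difference sets with parameters 4-{191; 85, 90, 90, 100; 174}: for every nonzero r ∈ ZMod 191, the total number of ordered pairs (i, j) with i, j ∈ S_k and i − j = r, summed over k = 1, 2, 3, 4, equals 174. -/
set_option maxRecDepth 100000
set_option maxHeartbeats 16000000

/-- The subgroup `H = {1, 39, 184, 109, 49}` of order 5 (powers of 39) in `(ZMod 191)ˣ`,
as a finset of `ZMod 191`. -/
def Hset : Finset (ZMod 191) := {1, 39, 184, 109, 49}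

/-- The coset representatives `r_0, …, r_18`. -/
def rlist : List (ZMod 191) :=
  [1, 2, 3, 4, 6, 8, 9, 11, 12, 13, 16, 17, 18, 19, 22, 32, 36, 38, 41]

/-- The cosets `α_i`, `0 ≤ i ≤ 37`: `α_{2i} = r_i·H` and `α_{2i+1} = (-r_i)·H`. -/
def alphaSet (i : ℕ) : Finset (ZMod 191) :=
  if i % 2 = 0 then Hset.image (fun h => rlist.getD (i / 2) 0 * h)
  else Hset.image (fun h => -(rlist.getD (i / 2) 0) * h)

def J1 : Finset ℕ := {1, 7, 9, 10, 11, 13, 17, 18, 25, 26, 30, 31, 33, 34, 35, 36, 37}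
def J2 : Finset ℕ := {1, 4, 7, 9, 11, 12, 13, 14, 19, 21, 22, 23, 24, 25, 26, 29, 36, 37}
def J3 : Finset ℕ := {0, 3, 4, 5, 7, 8, 9, 16, 17, 19, 24, 25, 29, 30, 31, 33, 35, 37}
def J4 : Finset ℕ := {1, 3, 4, 5, 8, 11, 14, 18, 19, 20, 21, 23, 24, 25, 28, 29, 30, 32, 34, 35}

def S1 : Finset (ZMod 191) := J1.biUnion alphaSet
def S2 : Finset (ZMod 191) := J2.biUnion alphaSet
def S3 : Finset (ZMod 191) := J3.biUnion alphaSet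
def S4 : Finset (ZMod 191) := J4.biUnion alphaSet

/- ### Auxiliary machinery -/

/-- Convert the product-filter count into a faster single-filter count. -/
lemma conv (S : Finset (ZMod 191)) (r : ZMod 191) :
    ((S ×ˢ S).filter (fun p => p.1 - p.2 = r)).card
      = (S.filter (fun j => j + r ∈ S)).card := by
  apply Finset.card_bij (fun p _ => p.2)
  · intro p hp
    simp only [Finset.mem_filter, Finset.mem_product] at hp ⊢
    refine ⟨hp.1.2, ?_⟩
    have : p.1 = p.2 + r := by linear_combination hp.2
    rw [← this]; exact hp.1.1
  · intro p hp q hq h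
    simp only [Finset.mem_filter, Finset.mem_product] at hp hq
    have h1 : p.1 = p.2 + r := by linear_combination hp.2
    have h2 : q.1 = q.2 + r := by linear_combination hq.2
    ext
    · rw [h1, h2, h]
    · exact h
  · intro j hj
    simp only [Finset.mem_filter] at hj
    exact ⟨(j + r, j), by simp [Finset.mem_filter, Finset.mem_product, hj.1, hj.2]⟩

/-- The count is symmetric under negation of `r`. -/
lemma negcard (S : Finset (ZMod 191)) (r : ZMod 191) :
    ((S ×ˢ S).filter (fun p => p.1 - p.2 = -r)).card
      = ((S ×ˢ S).filter (fun p => p.1 - p.2 = r)).card := by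
  apply Finset.card_bij (fun p _ => (p.2, p.1))
  · intro p hp
    simp only [Finset.mem_filter, Finset.mem_product] at hp ⊢
    exact ⟨⟨hp.1.2, hp.1.1⟩, by linear_combination -hp.2⟩
  · intro p hp q hq h
    have h1 := congrArg Prod.fst h
    have h2 := congrArg Prod.snd h
    simp only at h1 h2
    ext
    · exact h2
    · exact h1
  · intro q hq
    simp only [Finset.mem_filter, Finset.mem_product] at hq
    refine ⟨(q.2, q.1), ?_, rfl⟩
    simp only [Finset.mem_filter, Finset.mem_product]
    exact ⟨⟨hq.1.2, hq.1.1⟩, by linear_combination -hq.2⟩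

/-- The count is invariant under multiplying `r` by a unit `u` (with inverse `v`)
that stabilizes `S`. -/
lemma key (S : Finset (ZMod 191)) (u v : ZMod 191) (huv : v * u = 1)
    (hu : ∀ x ∈ S, u * x ∈ S) (hv : ∀ x ∈ S, v * x ∈ S) (r : ZMod 191) :
    ((S ×ˢ S).filter (fun p => p.1 - p.2 = u * r)).card
      = ((S ×ˢ S).filter (fun p => p.1 - p.2 = r)).card := by
  have e : ∀ x : ZMod 191, u * (v * x) = x := by
    intro x
    calc u * (v * x) = (v * u) * x := by ring
    _ = x := by rw [huv, one_mul]
  have e' : ∀ x : ZMod 191, v * (u * x) = x := by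
    intro x
    calc v * (u * x) = (v * u) * x := by ring
    _ = x := by rw [huv, one_mul]
  symm
  apply Finset.card_bij (fun p _ => (u * p.1, u * p.2))
  · intro p hp
    simp only [Finset.mem_filter, Finset.mem_product] at hp ⊢
    exact ⟨⟨hu _ hp.1.1, hu _ hp.1.2⟩, by linear_combination u * hp.2⟩
  · intro p hp q hq h
    have h1 := congrArg Prod.fst h
    have h2 := congrArg Prod.snd h
    simp only at h1 h2
    have e1 : p.1 = q.1 := by
      have := congrArg (fun z => v * z) h1
      simpa only [e'] using this
    have e2 : p.2 = q.2 := by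
      have := congrArg (fun z => v * z) h2
      simpa only [e'] using this
    ext
    · exact e1
    · exact e2
  · intro q hq
    simp only [Finset.mem_filter, Finset.mem_product] at hq
    refine ⟨(v * q.1, v * q.2), ?_, ?_⟩
    · simp only [Finset.mem_filter, Finset.mem_product]
      refine ⟨⟨hv _ hq.1.1, hv _ hq.1.2⟩, ?_⟩
      calc v * q.1 - v * q.2 = v * (q.1 - q.2) := by ring
      _ = v * (u * r) := by rw [hq.2]
      _ = r := e' r
    · show (u * (v * q.1), u * (v * q.2)) = q
      rw [e q.1, e q.2]

def Q (r : ZMod 191) : Prop :=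
      ((S1 ×ˢ S1).filter (fun p => p.1 - p.2 = r)).card +
      ((S2 ×ˢ S2).filter (fun p => p.1 - p.2 = r)).card +
      ((S3 ×ˢ S3).filter (fun p => p.1 - p.2 = r)).card +
      ((S4 ×ˢ S4).filter (fun p => p.1 - p.2 = r)).card = 174

lemma Q_iff (r : ZMod 191) : Q r ↔
      (S1.filter (fun j => j + r ∈ S1)).card +
      (S2.filter (fun j => j + r ∈ S2)).card +
      (S3.filter (fun j => j + r ∈ S3)).card +
      (S4.filter (fun j => j + r ∈ S4)).card = 174 := by
  unfold Q
  rw [conv, conv, conv, conv]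

lemma hu1 : ∀ x ∈ S1, (39 : ZMod 191) * x ∈ S1 := by decide
lemma hv1 : ∀ x ∈ S1, (49 : ZMod 191) * x ∈ S1 := by decide
lemma hu2 : ∀ x ∈ S2, (39 : ZMod 191) * x ∈ S2 := by decide
lemma hv2 : ∀ x ∈ S2, (49 : ZMod 191) * x ∈ S2 := by decide
lemma hu3 : ∀ x ∈ S3, (39 : ZMod 191) * x ∈ S3 := by decide
lemma hv3 : ∀ x ∈ S3, (49 : ZMod 191) * x ∈ S3 := by decide
lemma hu4 : ∀ x ∈ S4, (39 : ZMod 191) * x ∈ S4 := by decide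
lemma hv4 : ∀ x ∈ S4, (49 : ZMod 191) * x ∈ S4 := by decide

lemma c4939 : (49 : ZMod 191) * 39 = 1 := by decide

lemma Q39 (r : ZMod 191) (h : Q r) : Q (39 * r) := by
  unfold Q at h ⊢
  rw [key S1 39 49 c4939 hu1 hv1, key S2 39 49 c4939 hu2 hv2,
      key S3 39 49 c4939 hu3 hv3, key S4 39 49 c4939 hu4 hv4]
  exact h

lemma Qneg (r : ZMod 191) (h : Q r) : Q (-r) := by
  unfold Q at h ⊢
  rw [negcard, negcard, negcard, negcard]
  exact h

def repL : List (ZMod 191) :=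
  [1, 2, 3, 4, 6, 8, 9, 11, 12, 13, 16, 17, 18, 19, 22, 32, 36, 38, 41]
def powL : List (ZMod 191) := [1, 39, 184, 109, 49]

lemma cover : ∀ r : ZMod 191, r ≠ 0 →
    ∃ p ∈ powL, ∃ s ∈ repL, r = p * s ∨ r = -(p * s) := by decide

lemma q01 : Q 1 := (Q_iff _).mpr (by decide)
lemma q02 : Q 2 := (Q_iff _).mpr (by decide)
lemma q03 : Q 3 := (Q_iff _).mpr (by decide)
lemma q04 : Q 4 := (Q_iff _).mpr (by decide)
lemma q05 : Q 6 := (Q_iff _).mpr (by decide)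
lemma q06 : Q 8 := (Q_iff _).mpr (by decide)
lemma q07 : Q 9 := (Q_iff _).mpr (by decide)
lemma q08 : Q 11 := (Q_iff _).mpr (by decide)
lemma q09 : Q 12 := (Q_iff _).mpr (by decide)
lemma q10 : Q 13 := (Q_iff _).mpr (by decide)
lemma q11 : Q 16 := (Q_iff _).mpr (by decide)
lemma q12 : Q 17 := (Q_iff _).mpr (by decide)
lemma q13 : Q 18 := (Q_iff _).mpr (by decide)
lemma q14 : Q 19 := (Q_iff _).mpr (by decide)
lemma q15 : Q 22 := (Q_iff _).mpr (by decide)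
lemma q16 : Q 32 := (Q_iff _).mpr (by decide)
lemma q17 : Q 36 := (Q_iff _).mpr (by decide)
lemma q18 : Q 38 := (Q_iff _).mpr (by decide)
lemma q19 : Q 41 := (Q_iff _).mpr (by decide)

lemma Qreps : ∀ s ∈ repL, Q s := by
  intro s hs
  fin_cases hs
  · exact q01
  · exact q02
  · exact q03
  · exact q04
  · exact q05
  · exact q06
  · exact q07
  · exact q08
  · exact q09
  · exact q10
  · exact q11
  · exact q12
  · exact q13
  · exact q14
  · exact q15
  · exact q16
  · exact q17
  · exact q18
  · exact q19

lemma Qpows : ∀ p ∈ powL, ∀ x : ZMod 191, Q x → Q (p * x) := by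
  intro p hp
  fin_cases hp
  · intro x h; rw [one_mul]; exact h
  · intro x h; exact Q39 x h
  · intro x h
    have e : (184 : ZMod 191) * x = 39 * (39 * x) := by
      rw [show (184 : ZMod 191) = 39 * 39 from by decide, mul_assoc]
    rw [e]; exact Q39 _ (Q39 _ h)
  · intro x h
    have e : (109 : ZMod 191) * x = 39 * (39 * (39 * x)) := by
      rw [show (109 : ZMod 191) = 39 * (39 * 39) from by decide]; ring
    rw [e]; exact Q39 _ (Q39 _ (Q39 _ h))
  · intro x h
    have e : (49 : ZMod 191) * x = 39 * (39 * (39 * (39 * x))) := by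
      rw [show (49 : ZMod 191) = 39 * (39 * (39 * 39)) from by decide]; ring
    rw [e]; exact Q39 _ (Q39 _ (Q39 _ (Q39 _ h)))

/-- `S_1, S_2, S_3, S_4` are supplementary difference sets with parameters
`4-{191; 85, 90, 90, 100; 174}`. -/
theorem S_sds :
    ∀ r : ZMod 191, r ≠ 0 →
      ((S1 ×ˢ S1).filter (fun p => p.1 - p.2 = r)).card +
      ((S2 ×ˢ S2).filter (fun p => p.1 - p.2 = r)).card +
      ((S3 ×ˢ S3).filter (fun p => p.1 - p.2 = r)).card +
      ((S4 ×ˢ S4).filter (fun p => p.1 - p.2 = r)).card = 174 := by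
  intro r hr
  show Q r
  obtain ⟨p, hp, s, hs, hcase⟩ := cover r hr
  have hbase : Q (p * s) := Qpows p hp s (Qreps s hs)
  rcases hcase with rfl | rfl
  · exact hbase
  · exact Qneg _ hbase
end

section
/- The four circulant {±1}-matrices A_1, A_2, A_3, A_4 built from S_1, S_2, S_3, S_4 satisfy A_1 * A_1ᵀ + A_2 * A_2ᵀ + A_3 * A_3ᵀ + A_4 * A_4ᵀ = (764 : ℤ) • (1 : Matrix (ZMod 191) (ZMod 191) ℤ). -/
/-- The circulant `{±1}`-matrix with `-1` at positions where `j - i ∈ S_k`. -/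
def circMat (S : Finset (ZMod 191)) : Matrix (ZMod 191) (ZMod 191) ℤ :=
  Matrix.of fun i j => if j - i ∈ S then -1 else 1

/- Bitmask encodings of `S1, S2, S3, S4`: bit `t` of `Mk` is set iff `t ∈ Sk`. -/
def M1 : Nat := 1934883986007304142905726537739298881778540605276332500352
def M2 : Nat := 1934482248948221419364434730566356987500644679921148234376
def M3 : Nat := 1546014905719405838931240864540941269304597297800338001994
def M4 : Nat := 2762029252406420067839741807215773002048554397085025528008

/-- The `±1` indicator function read off from a bitmask. -/
def fB (m : Nat) (x : ZMod 191) : ℤ := if (m >>> x.val) % 2 = 1 then -1 else 1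

/-- The combined autocorrelation sum. -/
def gsum (c : ZMod 191) : ℤ :=
  ∑ t : ZMod 191, (fB M1 t * fB M1 (t + c) + fB M2 t * fB M2 (t + c)
    + fB M3 t * fB M3 (t + c) + fB M4 t * fB M4 (t + c))

set_option maxRecDepth 1000000 in
theorem key_s4 : ∀ c : ZMod 191, gsum c = if c = 0 then 764 else 0 := by decide +kernel

set_option maxRecDepth 1000000 in
theorem fB_eq : ∀ x : ZMod 191,
    (fB M1 x = if x ∈ S1 then -1 else 1) ∧ (fB M2 x = if x ∈ S2 then -1 else 1) ∧
    (fB M3 x = if x ∈ S3 then -1 else 1) ∧ (fB M4 x = if x ∈ S4 then -1 else 1) := by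
  decide +kernel

theorem entry_eq (S : Finset (ZMod 191)) (m : ℕ)
    (hm : ∀ x : ZMod 191, fB m x = if x ∈ S then (-1 : ℤ) else 1) (i j : ZMod 191) :
    (circMat S * (circMat S).transpose) i j
      = ∑ t : ZMod 191, fB m t * fB m (t + (i - j)) := by
  rw [Matrix.mul_apply]
  refine (Fintype.sum_equiv (Equiv.addRight i) _ _ (fun t => ?_)).symm
  simp only [Equiv.coe_addRight, circMat, Matrix.transpose_apply, Matrix.of_apply, hm]
  have e1 : t + i - i = t := by ring
  have e2 : t + i - j = t + (i - j) := by ring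
  rw [e1, e2]

/-- The circulant matrices `A_1, A_2, A_3, A_4` built from `S_1, S_2, S_3, S_4` satisfy
`A_1A_1ᵀ + A_2A_2ᵀ + A_3A_3ᵀ + A_4A_4ᵀ = 764·I`. -/
theorem A_sum_sq :
    circMat S1 * (circMat S1).transpose + circMat S2 * (circMat S2).transpose +
    circMat S3 * (circMat S3).transpose + circMat S4 * (circMat S4).transpose =
      (764 : ℤ) • (1 : Matrix (ZMod 191) (ZMod 191) ℤ) := by
  ext i j
  have h := fB_eq
  rw [Matrix.add_apply, Matrix.add_apply, Matrix.add_apply,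
    entry_eq S1 M1 (fun x => (h x).1) i j, entry_eq S2 M2 (fun x => (h x).2.1) i j,
    entry_eq S3 M3 (fun x => (h x).2.2.1) i j, entry_eq S4 M4 (fun x => (h x).2.2.2) i j]
  have hg : gsum (i - j) = if i - j = 0 then 764 else 0 := key_s4 (i - j)
  rw [gsum, Finset.sum_add_distrib, Finset.sum_add_distrib, Finset.sum_add_distrib] at hg
  rw [hg, Matrix.smul_apply, Matrix.one_apply]
  by_cases hij : i = j
  · simp [hij]
  · simp [hij, sub_ne_zero.mpr hij]
end

section
/- Let n be a positive natural number and let S_1, S_2, S_3, S_4 be subsets of ZMod n such that for every nonzero r ∈ ZMod n the total number of ordered pairs (i, j) with i, j ∈ S_k and i − j = r, summed over k = 1,2,3,4, equals λ := |S_1| + |S_2| + |S_3| + |S_4| − n. For k = 1,2,3,4 define the circulant matrix A_k : Matrix (ZMod n) (ZMod n) ℤ by A_k i j = −1 if j − i ∈ S_k and A_k i j = 1 otherwise. Then A_1*A_1ᵀ + A_2*A_2ᵀ + A_3*A_3ᵀ + A_4*A_4ᵀ = (4·n : ℤ) • (1 : Matrix (ZMod n) (ZMod n) ℤ). -/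
/-- The circulant `{±1}`-matrix with `-1` at positions where `j - i ∈ S`. -/
def circMatN (n : ℕ) (S : Finset (ZMod n)) : Matrix (ZMod n) (ZMod n) ℤ :=
  Matrix.of fun i j => if j - i ∈ S then -1 else 1

lemma circ_diag (n : ℕ) [NeZero n] (S : Finset (ZMod n)) (i : ZMod n) :
    (circMatN n S * (circMatN n S).transpose) i i = (n : ℤ) := by
  simp only [Matrix.mul_apply, Matrix.transpose_apply, circMatN, Matrix.of_apply]
  have : ∀ k : ZMod n, (if k - i ∈ S then (-1 : ℤ) else 1) * (if k - i ∈ S then (-1 : ℤ) else 1) = 1 := by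
    intro k; split_ifs <;> ring
  rw [Finset.sum_congr rfl (fun k _ => this k)]
  simp [ZMod.card n]

lemma circ_cnt (n : ℕ) [NeZero n] (S : Finset (ZMod n)) (i j : ZMod n) :
    (Finset.univ.filter (fun k => k - i ∈ S ∧ k - j ∈ S)).card
      = ((S ×ˢ S).filter (fun p => p.1 - p.2 = j - i)).card := by
  apply Finset.card_bij (fun k _ => (k - i, k - j))
  · intro k hk
    simp only [Finset.mem_filter, Finset.mem_univ, true_and] at hk
    simp only [Finset.mem_filter, Finset.mem_product]
    exact ⟨⟨hk.1, hk.2⟩, by ring⟩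
  · intro a ha b hb h
    have : a - i = b - i := congrArg Prod.fst h
    linear_combination this
  · intro p hp
    simp only [Finset.mem_filter, Finset.mem_product] at hp
    refine ⟨p.1 + i, ?_, ?_⟩
    · simp only [Finset.mem_filter, Finset.mem_univ, true_and]
      constructor
      · simpa using hp.1.1
      · have : p.1 + i - j = p.2 := by linear_combination hp.2
        rw [this]; exact hp.1.2
    · have : p.1 + i - j = p.2 := by linear_combination hp.2
      simp [this]

lemma circ_entry (n : ℕ) [NeZero n] (S : Finset (ZMod n)) (i j : ZMod n) :
    (circMatN n S * (circMatN n S).transpose) i j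
      = (n : ℤ) - 4 * S.card
        + 4 * ((S ×ˢ S).filter (fun p => p.1 - p.2 = j - i)).card := by
  simp only [Matrix.mul_apply, Matrix.transpose_apply, circMatN, Matrix.of_apply]
  have key : ∀ k : ZMod n,
      (if k - i ∈ S then (-1 : ℤ) else 1) * (if k - j ∈ S then (-1 : ℤ) else 1)
        = 1 - 2 * (if k - i ∈ S then (1 : ℤ) else 0) - 2 * (if k - j ∈ S then (1 : ℤ) else 0)
          + 4 * (if k - i ∈ S ∧ k - j ∈ S then (1 : ℤ) else 0) := by
    intro k
    by_cases h1 : k - i ∈ S <;> by_cases h2 : k - j ∈ S <;> simp [h1, h2] <;> ring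
  rw [Finset.sum_congr rfl (fun k _ => key k)]
  have hsum1 : ∀ (a : ZMod n), ∑ k : ZMod n, (if k - a ∈ S then (1 : ℤ) else 0) = S.card := by
    intro a
    have e := Fintype.sum_equiv (Equiv.subRight a)
      (fun k : ZMod n => if k - a ∈ S then (1 : ℤ) else 0)
      (fun k : ZMod n => if k ∈ S then (1 : ℤ) else 0) (fun k => rfl)
    rw [e, Finset.sum_boole]
    simp
  have hsum2 : ∑ k : ZMod n, (if k - i ∈ S ∧ k - j ∈ S then (1 : ℤ) else 0)
      = ((S ×ˢ S).filter (fun p => p.1 - p.2 = j - i)).card := by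
    rw [Finset.sum_boole]
    rw [circ_cnt n S i j]
  simp only [Finset.sum_add_distrib, Finset.sum_sub_distrib, ← Finset.mul_sum,
    hsum1, hsum2, Finset.sum_const, Finset.card_univ, ZMod.card, smul_eq_mul, mul_one]
  ring

/-- If `S_1, S_2, S_3, S_4` are supplementary difference sets in `ZMod n` with
`λ = |S_1| + |S_2| + |S_3| + |S_4| - n`, then the associated circulant `{±1}`-matrices
satisfy `A_1A_1ᵀ + A_2A_2ᵀ + A_3A_3ᵀ + A_4A_4ᵀ = 4n·I`. -/
theorem sds_circulant_sum_sq (n : ℕ) [NeZero n] (hn : 0 < n)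
    (S₁ S₂ S₃ S₄ : Finset (ZMod n))
    (hsds : ∀ r : ZMod n, r ≠ 0 →
      ((((S₁ ×ˢ S₁).filter (fun p => p.1 - p.2 = r)).card +
        ((S₂ ×ˢ S₂).filter (fun p => p.1 - p.2 = r)).card +
        ((S₃ ×ˢ S₃).filter (fun p => p.1 - p.2 = r)).card +
        ((S₄ ×ˢ S₄).filter (fun p => p.1 - p.2 = r)).card : ℕ) : ℤ) =
        (S₁.card : ℤ) + S₂.card + S₃.card + S₄.card - n) :
    circMatN n S₁ * (circMatN n S₁).transpose + circMatN n S₂ * (circMatN n S₂).transpose +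
    circMatN n S₃ * (circMatN n S₃).transpose + circMatN n S₄ * (circMatN n S₄).transpose =
      (4 * (n : ℤ)) • (1 : Matrix (ZMod n) (ZMod n) ℤ) := by
  ext i j
  simp only [Matrix.add_apply, Matrix.smul_apply, Matrix.one_apply, smul_eq_mul]
  by_cases hij : i = j
  · subst hij
    simp [circ_diag]
    ring
  · have hr : j - i ≠ 0 := fun h => hij (by linear_combination -h)
    have h := hsds (j - i) hr
    push_cast at h
    simp only [circ_entry, if_neg hij, mul_zero]
    linarith
end

section
/- The four circulant {±1}-matrices B_1, B_2, B_3, B_4 built from T_1, T_2, T_3, T_4 satisfy B_1 * B_1ᵀ + B_2 * B_2ᵀ + B_3 * B_3ᵀ + B_4 * B_4ᵀ = (764 : ℤ) • (1 : Matrix (ZMod 191) (ZMod 191) ℤ). -/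
def K1 : Finset ℕ := {0, 1, 6, 8, 9, 11, 12, 16, 18, 20, 21, 23, 28, 31, 33, 36, 37}
def K2 : Finset ℕ := {0, 1, 3, 4, 10, 12, 13, 17, 20, 22, 24, 31, 32, 33, 34, 35, 36, 37}
def K3 : Finset ℕ := {4, 8, 9, 10, 12, 13, 14, 16, 17, 20, 21, 24, 26, 27, 29, 31, 32, 34}
def K4 : Finset ℕ := {1, 7, 9, 10, 11, 12, 14, 15, 16, 17, 20, 22, 23, 25, 28, 29, 32, 33, 34, 37}

def T1 : Finset (ZMod 191) := K1.biUnion alphaSet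
def T2 : Finset (ZMod 191) := K2.biUnion alphaSet
def T3 : Finset (ZMod 191) := K3.biUnion alphaSet
def T4 : Finset (ZMod 191) := K4.biUnion alphaSet

/-! Auxiliary machinery: bitmask indicator descriptions of `T1, …, T4`. -/

def m1 : ℕ := 1658235117515275888215260314682069010874238390978173055730
def m2 : ℕ := 2385426659318480328975849075971918660785730250467391784842
def m3 : ℕ := 56091695722871110788529923084294977324060557160470126408
def m4 : ℕ := 1930310588411339444038132654193526080339591234463852633984

set_option maxRecDepth 100000 in
lemma T1_eq : T1 = Finset.univ.filter (fun y : ZMod 191 => m1.testBit y.val) := by decide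
set_option maxRecDepth 100000 in
lemma T2_eq : T2 = Finset.univ.filter (fun y : ZMod 191 => m2.testBit y.val) := by decide
set_option maxRecDepth 100000 in
lemma T3_eq : T3 = Finset.univ.filter (fun y : ZMod 191 => m3.testBit y.val) := by decide
set_option maxRecDepth 100000 in
lemma T4_eq : T4 = Finset.univ.filter (fun y : ZMod 191 => m4.testBit y.val) := by decide

lemma memT_of_eq {T : Finset (ZMod 191)} {m : ℕ}
    (h : T = Finset.univ.filter (fun y : ZMod 191 => m.testBit y.val)) :
    ∀ y : ZMod 191, y ∈ T ↔ m.testBit y.val := by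
  intro y; rw [h, Finset.mem_filter]; simp

lemma memT1 : ∀ y : ZMod 191, y ∈ T1 ↔ m1.testBit y.val := memT_of_eq T1_eq
lemma memT2 : ∀ y : ZMod 191, y ∈ T2 ↔ m2.testBit y.val := memT_of_eq T2_eq
lemma memT3 : ∀ y : ZMod 191, y ∈ T3 ↔ m3.testBit y.val := memT_of_eq T3_eq
lemma memT4 : ∀ y : ZMod 191, y ∈ T4 ↔ m4.testBit y.val := memT_of_eq T4_eq

/-- The `±1` indicator function attached to a bitmask. -/
def tb (m : ℕ) (x : ZMod 191) : ℤ := if Nat.testBit m x.val then -1 else 1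

/-- The number of `u` for which the indicator bits at `u` and `u - d` agree. -/
def ag (m : ℕ) (d : ZMod 191) : ℕ :=
  (Finset.univ.filter (fun u : ZMod 191 => m.testBit u.val = m.testBit (u - d).val)).card

lemma ag_neg (m : ℕ) (d : ZMod 191) : ag m (-d) = ag m d := by
  unfold ag
  apply Finset.card_bij (fun u _ => u + d)
  · intro u hu
    simp only [Finset.mem_filter, Finset.mem_univ, true_and] at hu ⊢
    rw [add_sub_cancel_right]
    rw [sub_neg_eq_add] at hu
    exact hu.symm
  · intro a _ b _ h; exact add_right_cancel h
  · intro v hv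
    refine ⟨v - d, ?_, by ring⟩
    simp only [Finset.mem_filter, Finset.mem_univ, true_and] at hv ⊢
    rw [sub_neg_eq_add, sub_add_cancel]
    exact hv.symm

set_option maxRecDepth 100000 in
set_option maxHeartbeats 4000000 in
lemma key_half : ∀ d : ZMod 191, d.val ≤ 95 →
    ag m1 d + ag m2 d + ag m3 d + ag m4 d = if d = 0 then 764 else 382 := by decide

lemma key_s10 : ∀ d : ZMod 191,
    ag m1 d + ag m2 d + ag m3 d + ag m4 d = if d = 0 then 764 else 382 := by
  intro d
  by_cases h : d.val ≤ 95
  · exact key_half d h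
  · have hd0 : d ≠ 0 := by intro h0; rw [h0] at h; simp [ZMod.val_zero] at h
    have hneg : (-d).val ≤ 95 := by
      rw [ZMod.neg_val, if_neg hd0]
      have := d.val_lt
      omega
    have h2 := key_half (-d) hneg
    have hne : (-d : ZMod 191) ≠ 0 := by simpa using hd0
    rw [if_neg hne] at h2
    rw [if_neg hd0]
    calc ag m1 d + ag m2 d + ag m3 d + ag m4 d
        = ag m1 (-d) + ag m2 (-d) + ag m3 (-d) + ag m4 (-d) := by
          rw [ag_neg, ag_neg, ag_neg, ag_neg]
      _ = 382 := h2

lemma tb_mul (m : ℕ) (x y : ZMod 191) :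
    tb m x * tb m y = if m.testBit x.val = m.testBit y.val then 1 else -1 := by
  unfold tb
  by_cases h1 : m.testBit x.val <;> by_cases h2 : m.testBit y.val <;> simp [h1, h2]

lemma sum_tb (m : ℕ) (d : ZMod 191) :
    (∑ u : ZMod 191, tb m u * tb m (u - d)) = 2 * (ag m d : ℤ) - 191 := by
  have h : ∀ u : ZMod 191, tb m u * tb m (u - d) =
      2 * (if m.testBit u.val = m.testBit (u - d).val then (1:ℤ) else 0) - 1 := by
    intro u
    rw [tb_mul]
    by_cases h : m.testBit u.val = m.testBit (u - d).val <;> simp [h]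
  simp only [h]
  rw [Finset.sum_sub_distrib, ← Finset.mul_sum, Finset.sum_boole, ag]
  simp [Finset.card_univ]

lemma circ_entry_s10 (S : Finset (ZMod 191)) (m : ℕ)
    (hS : ∀ y : ZMod 191, y ∈ S ↔ m.testBit y.val) (i j : ZMod 191) :
    (circMat S * (circMat S).transpose) i j = 2 * (ag m (j - i) : ℤ) - 191 := by
  rw [← sum_tb]
  rw [Matrix.mul_apply]
  rw [← Fintype.sum_equiv (Equiv.addRight i)
    (fun u => tb m u * tb m (u - (j - i)))
    (fun k => circMat S i k * (circMat S).transpose k j)]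
  intro u
  simp only [Equiv.coe_addRight, circMat, Matrix.transpose_apply, Matrix.of_apply]
  have e1 : u + i - i = u := by ring
  have e2 : u + i - j = u - (j - i) := by ring
  rw [e1, e2]
  congr 1
  · rw [tb]
    by_cases h : u ∈ S
    · rw [if_pos ((hS u).mp h), if_pos h]
    · rw [if_neg (fun hb => h ((hS u).mpr hb)), if_neg h]
  · rw [tb]
    by_cases h : u - (j - i) ∈ S
    · rw [if_pos ((hS _).mp h), if_pos h]
    · rw [if_neg (fun hb => h ((hS _).mpr hb)), if_neg h]

/-- The circulant matrices `B_1, B_2, B_3, B_4` built from `T_1, T_2, T_3, T_4` satisfy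
`B_1B_1ᵀ + B_2B_2ᵀ + B_3B_3ᵀ + B_4B_4ᵀ = 764·I`. -/
theorem B_sum_sq :
    circMat T1 * (circMat T1).transpose + circMat T2 * (circMat T2).transpose +
    circMat T3 * (circMat T3).transpose + circMat T4 * (circMat T4).transpose =
      (764 : ℤ) • (1 : Matrix (ZMod 191) (ZMod 191) ℤ) := by
  ext i j
  rw [Matrix.add_apply, Matrix.add_apply, Matrix.add_apply,
    circ_entry_s10 T1 m1 memT1, circ_entry_s10 T2 m2 memT2,
    circ_entry_s10 T3 m3 memT3, circ_entry_s10 T4 m4 memT4,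
    Matrix.smul_apply, Matrix.one_apply]
  have hk := key_s10 (j - i)
  have hij : (j - i = 0) ↔ (i = j) := by
    rw [sub_eq_zero]; exact ⟨fun h => h.symm, fun h => h.symm⟩
  by_cases h : i = j
  · rw [if_pos (hij.mpr h)] at hk
    rw [if_pos h]
    have : ((ag m1 (j-i) + ag m2 (j-i) + ag m3 (j-i) + ag m4 (j-i) : ℕ) : ℤ) = 764 := by
      exact_mod_cast hk
    push_cast at this
    simp only [smul_eq_mul, mul_one]
    linarith
  · rw [if_neg (fun hh => h (hij.mp hh))] at hk
    rw [if_neg h]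
    have : ((ag m1 (j-i) + ag m2 (j-i) + ag m3 (j-i) + ag m4 (j-i) : ℕ) : ℤ) = 382 := by
      exact_mod_cast hk
    push_cast at this
    simp only [smul_eq_mul, mul_zero]
    linarith
end

section
/- The quadruple (S_1, S_2, S_3, S_4) is not equivalent to the quadruple (T_1, T_2, T_3, T_4): there do NOT exist a unit a of ZMod 191, elements b_1, b_2, b_3, b_4 ∈ ZMod 191, and a permutation σ of {1, 2, 3, 4} such that T_{σ(k)} = {a·s + b_k : s ∈ S_k} for every k ∈ {1, 2, 3, 4}. -/
set_option maxRecDepth 100000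


/-- The quadruple of SDS's `(S_1, S_2, S_3, S_4)`, indexed by `Fin 4`. -/
def Squad : Fin 4 → Finset (ZMod 191) := ![S1, S2, S3, S4]

/-- The quadruple of SDS's `(T_1, T_2, T_3, T_4)`, indexed by `Fin 4`. -/
def Tquad : Fin 4 → Finset (ZMod 191) := ![T1, T2, T3, T4]

lemma key_decide : ∀ a : ZMod 191, a ^ 5 * 121 ≠ 147 := by decide

lemma sum5S1 : S1.sum (fun s => s ^ 5) = 121 := by decide
lemma sum5T1 : T1.sum (fun t => t ^ 5) = 147 := by decide

lemma sumS1 : S1.sum id = 0 := by decide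
lemma sumT1 : T1.sum id = 0 := by decide
lemma cardS1 : S1.card = 85 := by decide
lemma cardT2 : T2.card = 90 := by decide
lemma cardT3 : T3.card = 90 := by decide
lemma cardT4 : T4.card = 100 := by decide

/-- The quadruples `(S_1, S_2, S_3, S_4)` and `(T_1, T_2, T_3, T_4)` are not equivalent:
there are no unit `a`, elements `b_1, …, b_4`, and permutation `σ` of the four indices
with `T_{σ(k)} = a·S_k + b_k` for all `k`. -/
theorem S_T_not_equivalent :
    ¬ ∃ (a : (ZMod 191)ˣ) (b : Fin 4 → ZMod 191) (σ : Equiv.Perm (Fin 4)),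
        ∀ k : Fin 4, Tquad (σ k) = (Squad k).image (fun s => (a : ZMod 191) * s + b k) := by
  rintro ⟨a, b, σ, h⟩
  have h0 := h 0
  have hS0 : Squad 0 = S1 := rfl
  rw [hS0] at h0
  have hinj : Function.Injective (fun s : ZMod 191 => (a : ZMod 191) * s + b 0) := by
    intro x y hxy
    simp only at hxy
    have := add_right_cancel hxy
    exact a.isUnit.mul_right_injective this
  -- σ 0 must be 0 by cardinality
  have hcard : (Tquad (σ 0)).card = 85 := by
    rw [h0, Finset.card_image_of_injective _ hinj, cardS1]
  have hT : Tquad (σ 0) = T1 := by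
    set j := σ 0 with hj
    clear_value j
    fin_cases j
    · rfl
    · exact absurd ((cardT2.symm.trans hcard : (90:ℕ) = 85)) (by decide)
    · exact absurd ((cardT3.symm.trans hcard : (90:ℕ) = 85)) (by decide)
    · exact absurd ((cardT4.symm.trans hcard : (100:ℕ) = 85)) (by decide)
  rw [hT] at h0
  -- sum argument forces b 0 = 0
  have hsum : (0 : ZMod 191) = 85 * b 0 := by
    have := congrArg (fun x : Finset (ZMod 191) => x.sum id) h0
    rw [sumT1, Finset.sum_image (fun x _ y _ hxy => hinj hxy)] at this
    simp only [id] at this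
    rw [Finset.sum_add_distrib, ← Finset.mul_sum, Finset.sum_const, cardS1] at this
    have hs : (S1.sum fun i => i) = 0 := sumS1
    rw [hs, mul_zero, zero_add, nsmul_eq_mul] at this
    simpa using this
  have hb0 : b 0 = 0 := by
    have h9 : (9 : ZMod 191) * 85 = 1 := by decide
    calc b 0 = (9 * 85) * b 0 := by rw [h9, one_mul]
      _ = 9 * (85 * b 0) := by ring
      _ = 0 := by rw [← hsum, mul_zero]
  rw [hb0] at h0
  simp only [add_zero] at h0
  have h5 := congrArg (fun x : Finset (ZMod 191) => x.sum (fun t => t ^ 5)) h0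
  rw [sum5T1, Finset.sum_image (fun x _ y _ hxy => a.isUnit.mul_right_injective hxy)] at h5
  simp only [mul_pow, ← Finset.mul_sum] at h5
  rw [show (S1.sum fun s => s ^ 5) = 121 from sum5S1] at h5
  exact key_decide (a : ZMod 191) h5.symm
end
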